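/- Let (K, val) be a 2-henselian valued field with residue field of characteristic ≠ 2, B its valuation ring, A a subring with B ⊆ A ⊆ K, H = val(Aˣ). Every quasi-quadratic module ℳ in A admits the canonical representation ℳ = ⋃_{g ∈ H ∪ G_{≥e}} Φ(M_g(ℳ), g), where M_g(ℳ) = {p.an(x) : 0 ≠ x ∈ ℳ, val(x) = g} ∪ {0} and Φ(M, g) = {x ∈ A \ {0} : val(x)g⁻¹ ∈ G², (val(x)g⁻¹ ∈ H² or val(x) > g), p.an(x) ∈ M} ∪ {0}. -/

import Mathlib

/-- A (multiplicatively written) valuation on a field `K` with value group `G`: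
`v` is multiplicative and satisfies the ultrametric inequality on nonzero elements,
and is surjective onto `G`.  The value at `0` is irrelevant (the paper's `∞`). -/
structure MulValuation (K : Type*) [Field K] (G : Type*) [CommGroup G] [LinearOrder G] [IsOrderedMonoid G] where
  v : K → G
  map_mul : ∀ ⦃x y : K⦄, x ≠ 0 → y ≠ 0 → v (x * y) = v x * v y
  min_le_map_add : ∀ ⦃x y : K⦄, x ≠ 0 → y ≠ 0 → x + y ≠ 0 → min (v x) (v y) ≤ v (x + y)
  surj : ∀ g : G, ∃ x : K, x ≠ 0 ∧ v x = g

namespace MulValuation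

variable {K : Type*} [Field K] {G : Type*} [CommGroup G] [LinearOrder G] [IsOrderedMonoid G]

/-- The valuation ring `B = {x : val x ≥ e} ∪ {0}`, as a set. -/
def ringSet (V : MulValuation K G) : Set K := {x : K | x = 0 ∨ 1 ≤ V.v x}

/-- `val(Aˣ)`: the set of values of units of a subring `A` of `K`. -/
def unitVals (V : MulValuation K G) (A : Subring K) : Set G :=
  {g : G | ∃ x : K, x ≠ 0 ∧ x ∈ A ∧ x⁻¹ ∈ A ∧ V.v x = g}

end MulValuation

/-- `π : K → F` is a residue homomorphism for `V`: it is a surjective ring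
homomorphism on the valuation ring, whose nonvanishing locus on the valuation ring
is exactly the set of units of the valuation ring. -/
def MulValuation.IsResidue {K : Type*} [Field K] {G : Type*} [CommGroup G] [LinearOrder G] [IsOrderedMonoid G]
    {F : Type*} [Field F] (V : MulValuation K G) (π : K → F) : Prop :=
  π 0 = 0 ∧ π 1 = 1 ∧
  (∀ x y : K, x ∈ V.ringSet → y ∈ V.ringSet → π (x + y) = π x + π y) ∧
  (∀ x y : K, x ∈ V.ringSet → y ∈ V.ringSet → π (x * y) = π x * π y) ∧
  (∀ x : K, x ≠ 0 → x ∈ V.ringSet → (π x ≠ 0 ↔ V.v x = 1)) ∧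
  (∀ c : F, ∃ x ∈ V.ringSet, π x = c)

/-- `pan` is a pseudo-angular component map for `V` (with residue map `π`),
i.e. it satisfies conditions (1)-(6) of the paper (stated on nonzero elements). -/
def MulValuation.IsPseudoAngular {K : Type*} [Field K] {G : Type*} [CommGroup G] [LinearOrder G] [IsOrderedMonoid G]
    {F : Type*} [Field F] (V : MulValuation K G) (π : K → F) (pan : K → F) : Prop :=
  (∀ x : K, x ≠ 0 → pan x ≠ 0) ∧
  (∀ u : K, u ≠ 0 → V.v u = 1 → pan u = π u) ∧
  (∀ u x : K, u ≠ 0 → V.v u = 1 → x ≠ 0 → pan (u * x) = π u * pan x) ∧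
  (∀ (g : G) (c : F), c ≠ 0 → ∃ w : K, w ≠ 0 ∧ V.v w = g ∧ pan w = c) ∧
  (∀ x₁ x₂ : K, x₁ ≠ 0 → x₂ ≠ 0 → x₁ + x₂ ≠ 0 →
    (V.v x₁ < V.v x₂ → pan (x₁ + x₂) = pan x₁) ∧
    (V.v x₁ = V.v x₂ → pan x₁ + pan x₂ ≠ 0 →
      V.v (x₁ + x₂) = V.v x₁ ∧ pan (x₁ + x₂) = pan x₁ + pan x₂)) ∧
  (∀ x y : K, x ≠ 0 → y ≠ 0 → (∃ u : G, V.v x * (V.v y)⁻¹ = u ^ 2) → pan x = pan y →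
    ∃ u : K, u ≠ 0 ∧ y = u ^ 2 * x) ∧
  (∀ a u : K, a ≠ 0 → u ≠ 0 → ∃ k : F, k ≠ 0 ∧ pan (a * u ^ 2) = pan a * k ^ 2)

/-- `M_g(ℳ)`: the quasi-quadratic module of the residue field generated by `ℳ` and `g`. -/
def MulValuation.Mg {K : Type*} [Field K] {G : Type*} [CommGroup G] [LinearOrder G] [IsOrderedMonoid G]
    {F : Type*} [Field F] (V : MulValuation K G) (pan : K → F) (M : Set K) (g : G) : Set F :=
  {c : F | ∃ x : K, x ≠ 0 ∧ x ∈ M ∧ V.v x = g ∧ pan x = c} ∪ {0}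

/-- `Φ^A(M, ⟦g⟧)`: the quasi-quadratic module of `A` generated by `M` and the class of
`g` modulo `H²` where `H = val(Aˣ)`. -/
def MulValuation.Phi {K : Type*} [Field K] {G : Type*} [CommGroup G] [LinearOrder G] [IsOrderedMonoid G]
    {F : Type*} [Field F] (V : MulValuation K G) (A : Subring K) (pan : K → F)
    (M : Set F) (g : G) : Set K :=
  {x : K | x ≠ 0 ∧ x ∈ A ∧ (∃ u : G, V.v x * g⁻¹ = u ^ 2) ∧
    ((∃ h ∈ V.unitVals A, V.v x * g⁻¹ = h ^ 2) ∨ g < V.v x) ∧ pan x ∈ M} ∪ {0}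

/-! If `0 ≠ x ∈ ℳ`, then `x ∈ Φ(M_g(ℳ), g)` for `g = val x`, and `g ∈ H ∪ G_{≥e}` because
`val x < e` forces `x⁻¹ ∈ B ⊆ A`. Conversely, if `0 ≠ x ∈ Φ(M_g(ℳ), g)`, then `pan x = pan y`
for some `y ∈ ℳ` of value `g`; since `val x · g⁻¹` is a square, the square-class axiom of `pan`
gives `x = w² y`, and `val w` lies in `H` or exceeds `e`, so `w ∈ A` and `x ∈ ℳ`. -/

namespace MulValuation

variable {K : Type*} [Field K] {G : Type*} [CommGroup G] [LinearOrder G] [IsOrderedMonoid G]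
  (V : MulValuation K G)

theorem map_one : V.v 1 = 1 := by
  simpa using V.map_mul (one_ne_zero' K) (one_ne_zero' K)

theorem map_inv {x : K} (hx : x ≠ 0) : V.v x⁻¹ = (V.v x)⁻¹ := by
  refine eq_inv_of_mul_eq_one_right ?_
  rw [← V.map_mul hx (inv_ne_zero hx), mul_inv_cancel₀ hx, map_one]

theorem map_sq {x : K} (hx : x ≠ 0) : V.v (x ^ 2) = V.v x ^ 2 := by
  rw [sq, sq, V.map_mul hx hx]

theorem one_mem_unitVals (A : Subring K) : (1 : G) ∈ V.unitVals A :=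
  ⟨1, one_ne_zero, one_mem A, by simp, V.map_one⟩

variable {V} {A : Subring K}

theorem map_mem_unitVals_of_le_one (hBA : V.ringSet ⊆ A) {x : K} (hx0 : x ≠ 0) (hxA : x ∈ A)
    (hx : V.v x ≤ 1) : V.v x ∈ V.unitVals A :=
  ⟨x, hx0, hxA, hBA (Or.inr (by rw [V.map_inv hx0]; exact one_le_inv'.mpr hx)), rfl⟩

theorem mem_of_map_mem_unitVals (hBA : V.ringSet ⊆ A) {w : K} (hw0 : w ≠ 0)
    (hw : V.v w ∈ V.unitVals A) : w ∈ A := by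
  obtain ⟨b, hb0, hbA, -, hvb⟩ := hw
  have hunit : b⁻¹ * w ∈ A := hBA <| Or.inr <| by
    rw [V.map_mul (inv_ne_zero hb0) hw0, V.map_inv hb0, hvb, inv_mul_cancel]
  simpa [hb0] using mul_mem hbA hunit

variable {F : Type*} [Field F] {π pan : K → F}

theorem IsPseudoAngular.ne_zero (hpan : V.IsPseudoAngular π pan) {x : K} (hx : x ≠ 0) :
    pan x ≠ 0 :=
  hpan.1 x hx

theorem IsPseudoAngular.exists_eq_sq_mul (hpan : V.IsPseudoAngular π pan) {x y : K}
    (hx : x ≠ 0) (hy : y ≠ 0) (hsq : ∃ u : G, V.v x * (V.v y)⁻¹ = u ^ 2)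
    (hxy : pan x = pan y) : ∃ u : K, u ≠ 0 ∧ y = u ^ 2 * x :=
  hpan.2.2.2.2.2.1 x y hx hy hsq hxy

variable {M : Set K}

theorem mem_Phi_Mg_map (hMA : M ⊆ A) {x : K} (hx0 : x ≠ 0) (hxM : x ∈ M) :
    x ∈ V.Phi A pan (V.Mg pan M (V.v x)) (V.v x) :=
  Or.inl ⟨hx0, hMA hxM, ⟨1, by simp⟩, Or.inl ⟨1, V.one_mem_unitVals A, by simp⟩,
    Or.inl ⟨x, hx0, hxM, rfl, rfl⟩⟩

theorem mem_of_mem_Phi_Mg (hpan : V.IsPseudoAngular π pan) (hBA : V.ringSet ⊆ A)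
    (h0 : (0 : K) ∈ M) (hsq : ∀ a : K, a ∈ A → ∀ x ∈ M, a ^ 2 * x ∈ M) {g : G} {x : K}
    (hx : x ∈ V.Phi A pan (V.Mg pan M g) g) : x ∈ M := by
  rcases hx with ⟨hx0, -, ⟨u, hu⟩, hclass, hpanx⟩ | rfl
  swap; · exact h0
  rcases hpanx with ⟨y, hy0, hyM, rfl, hpy⟩ | hzero
  swap; · exact absurd hzero (hpan.ne_zero hx0)
  obtain ⟨w, hw0, rfl⟩ := hpan.exists_eq_sq_mul hy0 hx0
    ⟨u⁻¹, by rw [inv_pow, ← hu, mul_inv_rev, inv_inv, mul_comm]⟩ hpy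
  have hvw : V.v (w ^ 2 * y) * (V.v y)⁻¹ = V.v w ^ 2 := by
    rw [V.map_mul (pow_ne_zero 2 hw0) hy0, V.map_sq hw0, mul_inv_cancel_right]
  refine hsq w ?_ y hyM
  rcases hclass with ⟨h, hH, hh⟩ | hlt
  · rw [hvw] at hh
    exact mem_of_map_mem_unitVals hBA hw0 (pow_left_injective two_ne_zero hh ▸ hH)
  · refine hBA (Or.inr (one_lt_pow_iff two_ne_zero |>.mp ?_).le)
    rw [← hvw, ← div_eq_mul_inv]
    exact one_lt_div'.mpr hlt

end MulValuation

theorem stmt15_general {K : Type*} [Field K] {G : Type*} [CommGroup G] [LinearOrder G] [IsOrderedMonoid G]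
    {F : Type*} [Field F] (V : MulValuation K G) (π : K → F)
    (pan : K → F) (hpan : V.IsPseudoAngular π pan)
    (A : Subring K) (hBA : V.ringSet ⊆ (A : Set K))
    (M : Set K) (hMA : M ⊆ (A : Set K)) (h0 : (0 : K) ∈ M)
    (hsq : ∀ a : K, a ∈ A → ∀ x ∈ M, a ^ 2 * x ∈ M) :
    M = {x : K | ∃ g : G, (g ∈ V.unitVals A ∨ 1 ≤ g) ∧
      x ∈ V.Phi A pan (V.Mg pan M g) g} := by
  ext x
  refine ⟨fun hxM => ?_, fun ⟨_, _, hx⟩ => MulValuation.mem_of_mem_Phi_Mg hpan hBA h0 hsq hx⟩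
  by_cases hx0 : x = 0
  · exact ⟨1, Or.inr le_rfl, Or.inr hx0⟩
  refine ⟨V.v x, ?_, MulValuation.mem_Phi_Mg_map hMA hx0 hxM⟩
  rcases le_total (V.v x) 1 with hle | hge
  · exact Or.inl (MulValuation.map_mem_unitVals_of_le_one hBA hx0 (hMA hxM) hle)
  · exact Or.inr hge

theorem stmt15 {K : Type*} [Field K] {G : Type*} [CommGroup G] [LinearOrder G] [IsOrderedMonoid G]
    {F : Type*} [Field F] (V : MulValuation K G) (π : K → F)
    (hres : V.IsResidue π) (hchar : (2 : F) ≠ 0)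
    (hsqrt : ∀ x : K, x ≠ 0 → V.v x = 1 → π x = 1 → ∃ y : K, x = y ^ 2)
    (pan : K → F) (hpan : V.IsPseudoAngular π pan)
    (A : Subring K) (hBA : V.ringSet ⊆ (A : Set K))
    (M : Set K) (hMA : M ⊆ (A : Set K)) (h0 : (0 : K) ∈ M)
    (hadd : ∀ x ∈ M, ∀ y ∈ M, x + y ∈ M)
    (hsq : ∀ a : K, a ∈ A → ∀ x ∈ M, a ^ 2 * x ∈ M) :
    M = {x : K | ∃ g : G, (g ∈ V.unitVals A ∨ 1 ≤ g) ∧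
      x ∈ V.Phi A pan (V.Mg pan M g) g} :=
  stmt15_general V π pan hpan A hBA M hMA h0 hsq
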